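/- For every n ≥ 1, the graph T_3(n) has a hamiltonian 2-factor and a 2-factor with exactly two cycles; hence T_3(n) is not pseudo 2-factor isomorphic. -/
import Mathlib


open SimpleGraph

/-- A 2-factor of `G`: a spanning subgraph in which every vertex has degree exactly 2. -/
def SimpleGraph.IsTwoFactor {V : Type*} (G F : SimpleGraph V) : Prop :=
  F ≤ G ∧ ∀ v : V, (F.neighborSet v).ncard = 2

/-- The number of cycles of a 2-factor, i.e. its number of connected components. -/
noncomputable def SimpleGraph.numCycles {V : Type*} (F : SimpleGraph V) : ℕ :=
  Nat.card F.ConnectedComponent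

/-- A graph is pseudo 2-factor isomorphic if all its 2-factors have the same
parity of number of cycles. -/
def SimpleGraph.PseudoTwoFactorIsomorphic {V : Type*} (G : SimpleGraph V) : Prop :=
  ∀ F₁ F₂ : SimpleGraph V, G.IsTwoFactor F₁ → G.IsTwoFactor F₂ →
    F₁.numCycles % 2 = F₂.numCycles % 2

/-- Vertices of one segment `G_T` (20 vertices): `Sum.inl (a, j)` with
`a = 0,1,2,3,4,5` standing for `u^{j+1}, w^{j+1}, x^{j+1}, y^{j+1}, z^{j+1}, v^{j+1}`
(`j : Fin 3`), and `Sum.inr 0 = t¹`, `Sum.inr 1 = t²`. -/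
abbrev SegV : Type := Fin 6 × Fin 3 ⊕ Fin 2

/-- Adjacency inside the segment graph `G_T` (Boben's construction):
`u^j ∼ w^k` and `y^j ∼ z^k` for the pairs with `j + k ≠ 2` (0-indexed),
`w^j ∼ x^j`, `x^j ∼ y^j`, `z^j ∼ v^j`, `x^j ∼ t¹`, `v^j ∼ t²`. -/
def segAdj : SegV → SegV → Prop
  | Sum.inl (a, j), Sum.inl (b, k) =>
      (a = 0 ∧ b = 1 ∧ (j : ℕ) + (k : ℕ) ≠ 2) ∨
      (a = 1 ∧ b = 2 ∧ j = k) ∨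
      (a = 2 ∧ b = 3 ∧ j = k) ∨
      (a = 3 ∧ b = 4 ∧ (j : ℕ) + (k : ℕ) ≠ 2) ∨
      (a = 4 ∧ b = 5 ∧ j = k)
  | Sum.inl (a, _), Sum.inr t => (a = 2 ∧ t = 0) ∨ (a = 5 ∧ t = 1)
  | _, _ => False

/-- `T(n)`: `n` copies of the segment graph `G_T`, consecutive copies linked by the
edges `v_{i-1}^j u_i^j`, `j = 1,2,3`. -/
def Tgraph (n : ℕ) : SimpleGraph (Fin n × SegV) :=
  SimpleGraph.fromRel fun p q =>
    (p.1 = q.1 ∧ segAdj p.2 q.2) ∨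
    ((p.1 : ℕ) + 1 = (q.1 : ℕ) ∧ ∃ j : Fin 3, p.2 = Sum.inl (5, j) ∧ q.2 = Sum.inl (0, j))

/-- `T₃(n)`: `T(n)` plus the edges `u₁^1 v_n^3`, `u₁^2 v_n^1`, `u₁^3 v_n^2`. -/
def T3 (n : ℕ) : SimpleGraph (Fin n × SegV) :=
  SimpleGraph.fromRel fun p q =>
    (Tgraph n).Adj p q ∨
    ((p.1 : ℕ) = 0 ∧ (q.1 : ℕ) = n - 1 ∧
      ∃ j k : Fin 3, p.2 = Sum.inl (0, j) ∧ q.2 = Sum.inl (5, k) ∧ j = k + 1)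

instance : DecidableRel segAdj := fun p q => by
  rcases p with ⟨a, j⟩ | t <;> rcases q with ⟨b, k⟩ | t' <;> simp only [segAdj] <;> infer_instance

def uu (j : Fin 3) : SegV := Sum.inl (0, j)
def ww (j : Fin 3) : SegV := Sum.inl (1, j)
def xx (j : Fin 3) : SegV := Sum.inl (2, j)
def yy (j : Fin 3) : SegV := Sum.inl (3, j)
def zz (j : Fin 3) : SegV := Sum.inl (4, j)
def vv (j : Fin 3) : SegV := Sum.inl (5, j)
def t1 : SegV := Sum.inr 0
def t2 : SegV := Sum.inr 1

def pathA : Fin 20 → SegV :=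
  ![uu 1, ww 0, uu 0, ww 1, uu 2, ww 2, xx 2, yy 2, zz 2, vv 2,
    t2, vv 1, zz 1, yy 0, xx 0, t1, xx 1, yy 1, zz 0, vv 0]
def pathB : Fin 20 → SegV :=
  ![uu 0, ww 1, uu 2, ww 2, uu 1, ww 0, xx 0, yy 0, zz 1, vv 1,
    t2, vv 2, zz 2, yy 2, xx 2, t1, xx 1, yy 1, zz 0, vv 0]

lemma pathA_inj : Function.Injective pathA := by decide
lemma pathB_inj : Function.Injective pathB := by decide
lemma pathA_surj : ∀ s : SegV, ∃ r : Fin 20, pathA r = s := by decide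
lemma pathB_surj : ∀ s : SegV, ∃ r : Fin 20, pathB r = s := by decide
lemma pathA_consec : ∀ r : Fin 19,
    segAdj (pathA r.castSucc) (pathA r.succ) ∨ segAdj (pathA r.succ) (pathA r.castSucc) := by decide
lemma pathB_consec : ∀ r : Fin 19,
    segAdj (pathB r.castSucc) (pathB r.succ) ∨ segAdj (pathB r.succ) (pathB r.castSucc) := by decide

section Gen
variable {V ι : Type*} (Θ : ι → V) (succ pred : ι → ι)

def genF : SimpleGraph V :=
  SimpleGraph.fromRel fun a b => ∃ x, a = Θ x ∧ b = Θ (succ x)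

variable {Θ succ pred}

lemma genF_neighborSet (hinj : Function.Injective Θ)
    (hps : ∀ x, pred (succ x) = x) (hsp : ∀ x, succ (pred x) = x)
    (hne : ∀ x, succ x ≠ x) (y : ι) :
    (genF Θ succ).neighborSet (Θ y) = {Θ (succ y), Θ (pred y)} := by
  ext b
  simp only [mem_neighborSet, genF, fromRel_adj, Set.mem_insert_iff, Set.mem_singleton_iff]
  constructor
  · rintro ⟨hb, ⟨x, hx1, hx2⟩ | ⟨x, hx1, hx2⟩⟩
    · exact Or.inl (hx2 ▸ by rw [hinj hx1])
    · have : succ x = y := hinj hx2.symm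
      exact Or.inr (by rw [hx1, ← this, hps])
  · rintro (rfl | rfl)
    · exact ⟨fun h => hne y (hinj h.symm), Or.inl ⟨y, rfl, rfl⟩⟩
    · refine ⟨fun h => ?_, Or.inr ⟨pred y, rfl, by rw [hsp]⟩⟩
      have : y = pred y := hinj h
      exact hne (pred y) (by rw [hsp, ← this])

lemma genF_ncard (hinj : Function.Injective Θ)
    (hps : ∀ x, pred (succ x) = x) (hsp : ∀ x, succ (pred x) = x)
    (hne : ∀ x, succ x ≠ x) (hne2 : ∀ x, succ (succ x) ≠ x)
    (hsurj : ∀ v : V, ∃ x, Θ x = v) (v : V) :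
    ((genF Θ succ).neighborSet v).ncard = 2 := by
  obtain ⟨y, rfl⟩ := hsurj v
  rw [genF_neighborSet hinj hps hsp hne y]
  refine Set.ncard_pair fun h => hne2 y ?_
  have h2 : succ y = pred y := hinj h
  rw [h2, hsp]

lemma genF_le {G : SimpleGraph V} (hedge : ∀ x, G.Adj (Θ x) (Θ (succ x))) :
    genF Θ succ ≤ G := by
  intro a b hab
  rw [genF, fromRel_adj] at hab
  rcases hab with ⟨_, ⟨x, rfl, rfl⟩ | ⟨x, rfl, rfl⟩⟩
  · exact hedge x
  · exact (hedge x).symm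

lemma genF_adj_succ (hinj : Function.Injective Θ) (hne : ∀ x, succ x ≠ x) (x : ι) :
    (genF Θ succ).Adj (Θ x) (Θ (succ x)) := by
  rw [genF, fromRel_adj]
  exact ⟨fun h => hne x (hinj h.symm), Or.inl ⟨x, rfl, rfl⟩⟩

lemma genF_reach (hinj : Function.Injective Θ) (hne : ∀ x, succ x ≠ x) (x : ι) (k : ℕ) :
    (genF Θ succ).Reachable (Θ x) (Θ (succ^[k] x)) := by
  induction k with
  | zero => exact Reachable.refl _
  | succ k ih =>
      rw [Function.iterate_succ_apply']
      exact ih.trans (genF_adj_succ hinj hne _).reachable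

end Gen

section Idx
variable {n : ℕ}

def nextIdx (i : Fin n) : Fin n :=
  if h : i.val + 1 = n then ⟨0, by omega⟩ else ⟨i.val + 1, by have := i.isLt; omega⟩

def prevIdx (i : Fin n) : Fin n :=
  if h : i.val = 0 then ⟨n - 1, by have := i.isLt; omega⟩ else ⟨i.val - 1, by have := i.isLt; omega⟩

lemma nextIdx_val (i : Fin n) : (nextIdx i).val = if i.val + 1 = n then 0 else i.val + 1 := by
  unfold nextIdx; split_ifs <;> rfl

lemma prevIdx_val (i : Fin n) : (prevIdx i).val = if i.val = 0 then n - 1 else i.val - 1 := by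
  unfold prevIdx; split_ifs <;> rfl

lemma prevIdx_nextIdx (i : Fin n) : prevIdx (nextIdx i) = i := by
  have hi := i.isLt
  apply Fin.ext
  rw [prevIdx_val, nextIdx_val]
  split_ifs <;> first | exact False.elim ‹False› | omega

lemma nextIdx_prevIdx (i : Fin n) : nextIdx (prevIdx i) = i := by
  have hi := i.isLt
  apply Fin.ext
  rw [nextIdx_val, prevIdx_val]
  split_ifs <;> first | exact False.elim ‹False› | omega

end Idx

section F1
variable {n : ℕ}

def th1 (x : Fin n × Fin 20) : Fin n × SegV :=
  (x.1, if x.1.val = 0 then pathA x.2 else pathB x.2)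

def succ1 (x : Fin n × Fin 20) : Fin n × Fin 20 :=
  if h : x.2.val < 19 then (x.1, ⟨x.2.val + 1, by omega⟩) else (nextIdx x.1, ⟨0, by omega⟩)

def pred1 (x : Fin n × Fin 20) : Fin n × Fin 20 :=
  if h : 0 < x.2.val then (x.1, ⟨x.2.val - 1, by omega⟩) else (prevIdx x.1, ⟨19, by omega⟩)

lemma pred1_succ1 (x : Fin n × Fin 20) : pred1 (succ1 x) = x := by
  have h2 := x.2.isLt
  unfold succ1 pred1
  split_ifs with h hh hh
  · exact Prod.ext rfl (Fin.ext (by simp))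
  · exact absurd hh (by simp)
  · exact absurd hh (by simp)
  · rw [prevIdx_nextIdx]
    exact Prod.ext rfl (Fin.ext (by simp <;> omega))

lemma succ1_pred1 (x : Fin n × Fin 20) : succ1 (pred1 x) = x := by
  have h2 := x.2.isLt
  unfold succ1 pred1
  split_ifs with h hh hh
  · exact Prod.ext rfl (Fin.ext (by simp <;> omega))
  · exact absurd hh (by simp <;> omega)
  · exact absurd hh (by simp <;> omega)
  · rw [nextIdx_prevIdx]
    exact Prod.ext rfl (Fin.ext (by simp <;> omega))

lemma succ1_snd (x : Fin n × Fin 20) :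
    ((succ1 x).2 : ℕ) = if x.2.val < 19 then x.2.val + 1 else 0 := by
  unfold succ1; split_ifs <;> rfl

lemma succ1_ne (x : Fin n × Fin 20) : succ1 x ≠ x := by
  intro h
  have := congrArg (fun y => (y.2 : ℕ)) h
  simp only [succ1_snd] at this
  split_ifs at this <;> omega

lemma succ1_ne2 (x : Fin n × Fin 20) : succ1 (succ1 x) ≠ x := by
  intro h
  have := congrArg (fun y => (y.2 : ℕ)) h
  simp only [succ1_snd] at this
  split_ifs at this <;> omega

lemma th1_inj : Function.Injective (th1 (n := n)) := by
  rintro ⟨i, r⟩ ⟨i', r'⟩ h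
  have h1 : i = i' := congrArg Prod.fst h
  subst h1
  have h2 := congrArg Prod.snd h
  simp only [th1] at h2
  split_ifs at h2 with hc
  · exact Prod.ext rfl (pathA_inj h2)
  · exact Prod.ext rfl (pathB_inj h2)

lemma th1_surj : ∀ v : Fin n × SegV, ∃ x, th1 x = v := by
  rintro ⟨i, s⟩
  by_cases hc : i.val = 0
  · obtain ⟨r, hr⟩ := pathA_surj s
    exact ⟨(i, r), by simp [th1, hc, hr]⟩
  · obtain ⟨r, hr⟩ := pathB_surj s
    exact ⟨(i, r), by simp [th1, hc, hr]⟩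

lemma T3_adj_of_segAdj {i : Fin n} {s s' : SegV} (hne : s ≠ s')
    (h : segAdj s s' ∨ segAdj s' s) : (T3 n).Adj (i, s) (i, s') := by
  have hpne : (i, s) ≠ (i, s') := fun hb => hne (congrArg Prod.snd hb)
  have htg : (Tgraph n).Adj (i, s) (i, s') := by
    rw [Tgraph, fromRel_adj]
    rcases h with h | h
    · exact ⟨hpne, Or.inl (Or.inl ⟨rfl, h⟩)⟩
    · exact ⟨hpne, Or.inr (Or.inl ⟨rfl, h⟩)⟩
  rw [T3, fromRel_adj]
  exact ⟨hpne, Or.inl (Or.inl htg)⟩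

lemma T3_adj_link {i i' : Fin n} (h : i.val + 1 = i'.val) :
    (T3 n).Adj (i, vv 0) (i', uu 0) := by
  have hpne : (i, vv 0) ≠ (i', uu 0) := by
    intro hb
    have := congrArg (fun p => (p.1 : ℕ)) hb
    simp at this; omega
  have htg : (Tgraph n).Adj (i, vv 0) (i', uu 0) := by
    rw [Tgraph, fromRel_adj]
    exact ⟨hpne, Or.inl (Or.inr ⟨h, 0, rfl, rfl⟩)⟩
  rw [T3, fromRel_adj]
  exact ⟨hpne, Or.inl (Or.inl htg)⟩

lemma T3_adj_wrap {i z : Fin n} (h : i.val = n - 1) (hz : z.val = 0) :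
    (T3 n).Adj (i, vv 0) (z, uu 1) := by
  have hpne : (i, vv 0) ≠ (z, uu 1) := by
    intro hb
    have := congrArg Prod.snd hb
    simp [vv, uu] at this
  rw [T3, fromRel_adj]
  exact ⟨hpne, Or.inr (Or.inr ⟨hz, h, 1, 0, rfl, rfl, by decide⟩)⟩

lemma th1_start (i : Fin n) : (th1 (i, ⟨0, by omega⟩)).2 =
    if i.val = 0 then uu 1 else uu 0 := by
  simp only [th1]; split_ifs <;> rfl

lemma th1_end (i : Fin n) (r : Fin 20) (hr : r.val = 19) : (th1 (i, r)).2 = vv 0 := by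
  have hre : r = ⟨19, by omega⟩ := Fin.ext hr
  rw [hre]
  simp only [th1]; split_ifs <;> rfl

lemma edge1 (x : Fin n × Fin 20) : (T3 n).Adj (th1 x) (th1 (succ1 x)) := by
  obtain ⟨i, r⟩ := x
  by_cases h : r.val < 19
  · have hs : succ1 (i, r) = (i, (⟨r.val + 1, by omega⟩ : Fin 20)) := by
      unfold succ1; rw [dif_pos h]
    rw [hs]
    simp only [th1]
    split_ifs with hc
    · refine T3_adj_of_segAdj ?_ (pathA_consec ⟨r.val, h⟩)
      intro he
      have := congrArg Fin.val (pathA_inj he)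
      simp at this
    · refine T3_adj_of_segAdj ?_ (pathB_consec ⟨r.val, h⟩)
      intro he
      have := congrArg Fin.val (pathB_inj he)
      simp at this
  · have hr : r.val = 19 := by have := r.isLt; omega
    have hs : succ1 (i, r) = (nextIdx i, ⟨0, by omega⟩) := by
      unfold succ1; rw [dif_neg h]
    rw [hs]
    have e1 : th1 (i, r) = (i, vv 0) := Prod.ext rfl (th1_end i r hr)
    rw [e1]
    by_cases hb : i.val + 1 = n
    · have hz : (nextIdx i).val = 0 := by rw [nextIdx_val, if_pos hb]
      have e2 : th1 (nextIdx i, ⟨0, by omega⟩) = (nextIdx i, uu 1) :=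
        Prod.ext rfl (by rw [th1_start, if_pos hz])
      rw [e2]
      exact T3_adj_wrap (by have := i.isLt; omega) hz
    · have hz : (nextIdx i).val = i.val + 1 := by rw [nextIdx_val, if_neg hb]
      have e2 : th1 (nextIdx i, ⟨0, by omega⟩) = (nextIdx i, uu 0) :=
        Prod.ext rfl (by rw [th1_start, if_neg (by omega)])
      rw [e2]
      exact T3_adj_link hz.symm

end F1

section F1cov
variable {n : ℕ}

lemma succ1_iter_small (i : Fin n) (m : ℕ) (hm : m ≤ 19) :
    succ1^[m] (i, (⟨0, by omega⟩ : Fin 20)) = (i, ⟨m, by omega⟩) := by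
  induction m with
  | zero => rfl
  | succ k ih =>
    rw [Function.iterate_succ_apply', ih (by omega)]
    unfold succ1
    rw [dif_pos (show k < 19 by omega)]

lemma succ1_iter_20 (i : Fin n) (h : i.val + 1 < n) :
    succ1^[20] (i, (⟨0, by omega⟩ : Fin 20)) = (⟨i.val + 1, h⟩, ⟨0, by omega⟩) := by
  have h19 := succ1_iter_small i 19 (le_refl _)
  rw [Function.iterate_succ_apply', h19]
  have hstep : succ1 (i, (⟨19, by omega⟩ : Fin 20)) = (nextIdx i, ⟨0, by omega⟩) := by
    unfold succ1; rw [dif_neg (show ¬((19:ℕ) < 19) by omega)]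
  rw [hstep]
  refine Prod.ext (Fin.ext ?_) rfl
  rw [nextIdx_val]
  rw [if_neg (by omega)]

lemma succ1_iter_20j (j : ℕ) (h : j < n) :
    succ1^[20 * j] ((⟨0, by omega⟩ : Fin n), (⟨0, by omega⟩ : Fin 20)) =
      (⟨j, h⟩, ⟨0, by omega⟩) := by
  induction j with
  | zero => rfl
  | succ k ih =>
    rw [show 20 * (k + 1) = 20 + 20 * k by ring, Function.iterate_add_apply, ih (by omega)]
    exact succ1_iter_20 ⟨k, by omega⟩ h

lemma succ1_cover (hn : 0 < n) (x : Fin n × Fin 20) :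
    ∃ k, succ1^[k] ((⟨0, hn⟩ : Fin n), (⟨0, by omega⟩ : Fin 20)) = x := by
  obtain ⟨i, r⟩ := x
  refine ⟨r.val + 20 * i.val, ?_⟩
  rw [Function.iterate_add_apply, succ1_iter_20j i.val i.isLt,
    succ1_iter_small _ r.val (by have := r.isLt; omega)]

lemma F1_isTwoFactor : (T3 n).IsTwoFactor (genF th1 succ1) :=
  ⟨genF_le edge1, genF_ncard th1_inj pred1_succ1 succ1_pred1 succ1_ne succ1_ne2 th1_surj⟩

lemma F1_connected (hn : 0 < n) : (genF (th1 (n := n)) succ1).Connected := by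
  rw [connected_iff]
  refine ⟨fun u v => ?_, ⟨th1 (⟨0, hn⟩, ⟨0, by omega⟩)⟩⟩
  obtain ⟨xu, rfl⟩ := th1_surj u
  obtain ⟨xv, rfl⟩ := th1_surj v
  obtain ⟨ku, hku⟩ := succ1_cover hn xu
  obtain ⟨kv, hkv⟩ := succ1_cover hn xv
  have ru := genF_reach th1_inj succ1_ne ((⟨0, hn⟩ : Fin n), (⟨0, by omega⟩ : Fin 20)) ku
  have rv := genF_reach th1_inj succ1_ne ((⟨0, hn⟩ : Fin n), (⟨0, by omega⟩ : Fin 20)) kv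
  rw [hku] at ru; rw [hkv] at rv
  exact ru.symm.trans rv

end F1cov

section F2
variable {n : ℕ}

def pathC : Fin 20 → SegV :=
  ![uu 1, ww 2, uu 2, ww 1, uu 0, ww 0, xx 0, yy 0, zz 0, vv 0,
    xx 1, t1, xx 2, yy 2, zz 1, vv 1, t2, vv 2, zz 2, yy 1]

lemma pathC_inj : Function.Injective pathC := by decide
lemma pathC_surj : ∀ s : SegV, ∃ r : Fin 20, pathC r = s := by decide
lemma pathC_consec : ∀ r : Fin 19, r.val ≠ 9 →
    segAdj (pathC r.castSucc) (pathC r.succ) ∨ segAdj (pathC r.succ) (pathC r.castSucc) := by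
  decide
lemma pathC_close : segAdj (pathC 10) (pathC 19) ∨ segAdj (pathC 19) (pathC 10) := by decide

def th2 (x : Fin n × Fin 20) : Fin n × SegV :=
  (x.1, if x.1.val = 0 then pathC x.2 else pathB x.2)

def succ2 : Fin n × Fin 20 → Fin n × Fin 20
  | (i, r) =>
    if i.val = 0 ∧ r.val = 9 then (nextIdx i, ⟨0, by omega⟩)
    else if i.val = 0 ∧ r.val = 19 then (i, ⟨10, by omega⟩)
    else if h : r.val < 19 then (i, ⟨r.val + 1, by omega⟩)
    else (nextIdx i, ⟨0, by omega⟩)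

def pred2 : Fin n × Fin 20 → Fin n × Fin 20
  | (i, r) =>
    if i.val = 0 ∧ r.val = 10 then (i, ⟨19, by omega⟩)
    else if h : 0 < r.val then (i, ⟨r.val - 1, by omega⟩)
    else if (prevIdx i).val = 0 then (prevIdx i, ⟨9, by omega⟩)
    else (prevIdx i, ⟨19, by omega⟩)

lemma pred2_succ2 (x : Fin n × Fin 20) : pred2 (succ2 x) = x := by
  obtain ⟨i, r⟩ := x
  have hr := r.isLt
  by_cases c1 : i.val = 0 ∧ r.val = 9
  · have e : succ2 (i, r) = (nextIdx i, ⟨0, by omega⟩) := by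
      simp only [succ2]; rw [if_pos c1]
    rw [e]
    simp only [pred2]
    rw [if_neg (by simp), dif_neg (by simp), if_pos (by rw [prevIdx_nextIdx]; exact c1.1)]
    rw [prevIdx_nextIdx]
    exact Prod.ext rfl (Fin.ext (by simp [c1.2]))
  · by_cases c2 : i.val = 0 ∧ r.val = 19
    · have e : succ2 (i, r) = (i, ⟨10, by omega⟩) := by
        simp only [succ2]; rw [if_neg c1, if_pos c2]
      rw [e]
      simp only [pred2]
      rw [if_pos (show _ ∧ _ from ⟨c2.1, by trivial⟩)]
      exact Prod.ext rfl (Fin.ext (by simp [c2.2]))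
    · by_cases c3 : r.val < 19
      · have e : succ2 (i, r) = (i, ⟨r.val + 1, by omega⟩) := by
          simp only [succ2]; rw [if_neg c1, if_neg c2, dif_pos c3]
        rw [e]
        simp only [pred2]
        rw [if_neg (by simp; omega), dif_pos (by simp)]
        exact Prod.ext rfl (Fin.ext (by simp))
      · have hi : i.val ≠ 0 := fun h0 => c2 ⟨h0, by omega⟩
        have e : succ2 (i, r) = (nextIdx i, ⟨0, by omega⟩) := by
          simp only [succ2]; rw [if_neg c1, if_neg c2, dif_neg c3]
        rw [e]
        simp only [pred2]
        rw [if_neg (by simp), dif_neg (by simp), if_neg (by rw [prevIdx_nextIdx]; exact hi)]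
        rw [prevIdx_nextIdx]
        exact Prod.ext rfl (Fin.ext (by simp; omega))

lemma succ2_pred2 (x : Fin n × Fin 20) : succ2 (pred2 x) = x := by
  obtain ⟨i, r⟩ := x
  have hr := r.isLt
  by_cases c1 : i.val = 0 ∧ r.val = 10
  · have e : pred2 (i, r) = (i, ⟨19, by omega⟩) := by
      simp only [pred2]; rw [if_pos c1]
    rw [e]
    simp only [succ2]
    rw [if_neg (by simp), if_pos (show _ ∧ _ from ⟨c1.1, by trivial⟩)]
    exact Prod.ext rfl (Fin.ext (by simp [c1.2]))
  · by_cases c2 : 0 < r.val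
    · have e : pred2 (i, r) = (i, ⟨r.val - 1, by omega⟩) := by
        simp only [pred2]; rw [if_neg c1, dif_pos c2]
      rw [e]
      simp only [succ2]
      rw [if_neg (by simp <;> omega), if_neg (by simp <;> omega), dif_pos (by first | omega | (simp <;> omega))]
      exact Prod.ext rfl (Fin.ext (by simp; omega))
    · by_cases c3 : (prevIdx i).val = 0
      · have e : pred2 (i, r) = (prevIdx i, ⟨9, by omega⟩) := by
          simp only [pred2]; rw [if_neg c1, dif_neg c2, if_pos c3]
        rw [e]
        simp only [succ2]
        rw [if_pos (show _ ∧ _ from ⟨c3, by trivial⟩), nextIdx_prevIdx]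
        exact Prod.ext rfl (Fin.ext (by simp; omega))
      · have e : pred2 (i, r) = (prevIdx i, ⟨19, by omega⟩) := by
          simp only [pred2]; rw [if_neg c1, dif_neg c2, if_neg c3]
        rw [e]
        simp only [succ2]
        rw [if_neg (fun hc => c3 hc.1), if_neg (fun hc => c3 hc.1), dif_neg (by simp), nextIdx_prevIdx]
        exact Prod.ext rfl (Fin.ext (by simp; omega))

end F2

section F2b
variable {n : ℕ}

lemma succ2_snd (x : Fin n × Fin 20) :
    ((succ2 x).2 : ℕ) =
      if x.1.val = 0 ∧ x.2.val = 9 then 0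
      else if x.1.val = 0 ∧ x.2.val = 19 then 10
      else if x.2.val < 19 then x.2.val + 1 else 0 := by
  obtain ⟨i, r⟩ := x
  simp only [succ2]
  split_ifs <;> rfl

lemma succ2_ne (x : Fin n × Fin 20) : succ2 x ≠ x := by
  intro h
  have hval := congrArg (fun y => (y.2 : ℕ)) h
  simp only [succ2_snd] at hval
  split_ifs at hval <;> omega

lemma succ2_ne2 (x : Fin n × Fin 20) : succ2 (succ2 x) ≠ x := by
  intro h
  have hval := congrArg (fun y => (y.2 : ℕ)) h
  simp only [succ2_snd] at hval
  split_ifs at hval <;> omega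

lemma th2_inj : Function.Injective (th2 (n := n)) := by
  rintro ⟨i, r⟩ ⟨i', r'⟩ h
  have h1 : i = i' := congrArg Prod.fst h
  subst h1
  have h2 := congrArg Prod.snd h
  simp only [th2] at h2
  split_ifs at h2 with hc
  · exact Prod.ext rfl (pathC_inj h2)
  · exact Prod.ext rfl (pathB_inj h2)

lemma th2_surj : ∀ v : Fin n × SegV, ∃ x, th2 x = v := by
  rintro ⟨i, s⟩
  by_cases hc : i.val = 0
  · obtain ⟨r, hr⟩ := pathC_surj s
    exact ⟨(i, r), by simp [th2, hc, hr]⟩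
  · obtain ⟨r, hr⟩ := pathB_surj s
    exact ⟨(i, r), by simp [th2, hc, hr]⟩

lemma th2_start (i : Fin n) : (th2 (i, ⟨0, by omega⟩)).2 =
    if i.val = 0 then uu 1 else uu 0 := by
  simp only [th2]; split_ifs <;> rfl

lemma boundary_adj (i : Fin n) (s' : SegV)
    (hs' : s' = if (nextIdx i).val = 0 then uu 1 else uu 0) :
    (T3 n).Adj (i, vv 0) (nextIdx i, s') := by
  by_cases hb : i.val + 1 = n
  · have hz : (nextIdx i).val = 0 := by rw [nextIdx_val, if_pos hb]
    rw [hs', if_pos hz]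
    exact T3_adj_wrap (by have := i.isLt; omega) hz
  · have hz : (nextIdx i).val = i.val + 1 := by rw [nextIdx_val, if_neg hb]
    rw [hs', if_neg (by omega)]
    exact T3_adj_link hz.symm

lemma edge2 (x : Fin n × Fin 20) : (T3 n).Adj (th2 x) (th2 (succ2 x)) := by
  obtain ⟨i, r⟩ := x
  by_cases c1 : i.val = 0 ∧ r.val = 9
  · have e : succ2 (i, r) = (nextIdx i, ⟨0, by omega⟩) := by
      simp only [succ2]; rw [if_pos c1]
    rw [e]
    have e1 : th2 (i, r) = (i, vv 0) := by
      refine Prod.ext rfl ?_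
      have hre : r = ⟨9, by omega⟩ := Fin.ext c1.2
      rw [hre]
      simp only [th2]
      rw [if_pos c1.1]
      rfl
    have e2 : th2 (nextIdx i, (⟨0, by omega⟩ : Fin 20)) =
        (nextIdx i, if (nextIdx i).val = 0 then uu 1 else uu 0) :=
      Prod.ext rfl (th2_start _)
    rw [e1, e2]
    exact boundary_adj _ _ rfl
  · by_cases c2 : i.val = 0 ∧ r.val = 19
    · have e : succ2 (i, r) = (i, ⟨10, by omega⟩) := by
        simp only [succ2]; rw [if_neg c1, if_pos c2]
      rw [e]
      have hre : r = ⟨19, by omega⟩ := Fin.ext c2.2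
      rw [hre]
      simp only [th2]
      rw [if_pos c2.1, if_pos c2.1]
      refine T3_adj_of_segAdj ?_ pathC_close.symm
      intro he
      have := congrArg Fin.val (pathC_inj he)
      simp at this
    · by_cases c3 : r.val < 19
      · have e : succ2 (i, r) = (i, ⟨r.val + 1, by omega⟩) := by
          simp only [succ2]; rw [if_neg c1, if_neg c2, dif_pos c3]
        rw [e]
        simp only [th2]
        split_ifs with hc
        · have hr9 : r.val ≠ 9 := fun h9 => c1 ⟨hc, h9⟩
          refine T3_adj_of_segAdj ?_ (pathC_consec ⟨r.val, c3⟩ hr9)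
          intro he
          have := congrArg Fin.val (pathC_inj he)
          simp at this
        · refine T3_adj_of_segAdj ?_ (pathB_consec ⟨r.val, c3⟩)
          intro he
          have := congrArg Fin.val (pathB_inj he)
          simp at this
      · have hr : r.val = 19 := by have := r.isLt; omega
        have hi : i.val ≠ 0 := fun h0 => c2 ⟨h0, hr⟩
        have e : succ2 (i, r) = (nextIdx i, ⟨0, by omega⟩) := by
          simp only [succ2]; rw [if_neg c1, if_neg c2, dif_neg c3]
        rw [e]
        have e1 : th2 (i, r) = (i, vv 0) := by
          refine Prod.ext rfl ?_
          have hre : r = ⟨19, by omega⟩ := Fin.ext hr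
          rw [hre]
          simp only [th2]
          rw [if_neg hi]
          rfl
        have e2 : th2 (nextIdx i, (⟨0, by omega⟩ : Fin 20)) =
            (nextIdx i, if (nextIdx i).val = 0 then uu 1 else uu 0) :=
          Prod.ext rfl (th2_start _)
        rw [e1, e2]
        exact boundary_adj _ _ rfl

lemma F2_isTwoFactor : (T3 n).IsTwoFactor (genF th2 succ2) :=
  ⟨genF_le edge2, genF_ncard th2_inj pred2_succ2 succ2_pred2 succ2_ne succ2_ne2 th2_surj⟩

end F2b

section F2c
variable {n : ℕ}

lemma s2_step_norm (i : Fin n) (k : ℕ) (hk : k < 19) (hne9 : i.val = 0 → k ≠ 9) :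
    succ2 (i, (⟨k, by omega⟩ : Fin 20)) = (i, ⟨k + 1, by omega⟩) := by
  simp only [succ2]
  rw [if_neg (fun hc => hne9 hc.1 hc.2), if_neg (fun hc => by have := hc.2; omega),
    dif_pos hk]

lemma s2_seg (i : Fin n) (hi : i.val ≠ 0) (m : ℕ) (hm : m ≤ 19) :
    succ2^[m] (i, (⟨0, by omega⟩ : Fin 20)) = (i, ⟨m, by omega⟩) := by
  induction m with
  | zero => rfl
  | succ k ih =>
    rw [Function.iterate_succ_apply', ih (by omega)]
    exact s2_step_norm i k (by omega) (fun h0 => absurd h0 hi)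

lemma s2_seg0 (hn : 0 < n) (m : ℕ) (hm : m ≤ 9) :
    succ2^[m] ((⟨0, hn⟩ : Fin n), (⟨0, by omega⟩ : Fin 20)) = (⟨0, hn⟩, ⟨m, by omega⟩) := by
  induction m with
  | zero => rfl
  | succ k ih =>
    rw [Function.iterate_succ_apply', ih (by omega)]
    exact s2_step_norm _ k (by omega) (fun _ => by omega)

lemma s2_small (hn : 0 < n) (m : ℕ) (hm : m ≤ 9) :
    succ2^[m] ((⟨0, hn⟩ : Fin n), (⟨10, by omega⟩ : Fin 20)) = (⟨0, hn⟩, ⟨10 + m, by omega⟩) := by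
  induction m with
  | zero => rfl
  | succ k ih =>
    rw [Function.iterate_succ_apply', ih (by omega)]
    exact s2_step_norm _ (10 + k) (by omega) (fun _ => by omega)

lemma s2_to_next0 (hn : 0 < n) :
    succ2^[10] ((⟨0, hn⟩ : Fin n), (⟨0, by omega⟩ : Fin 20)) = (nextIdx ⟨0, hn⟩, ⟨0, by omega⟩) := by
  rw [Function.iterate_succ_apply', s2_seg0 hn 9 (by omega)]
  simp only [succ2]
  simp

lemma s2_seg_20 (i : Fin n) (hi : i.val ≠ 0) :
    succ2^[20] (i, (⟨0, by omega⟩ : Fin 20)) = (nextIdx i, ⟨0, by omega⟩) := by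
  rw [Function.iterate_succ_apply', s2_seg i hi 19 (by omega)]
  simp only [succ2]
  rw [if_neg (fun hc => hi hc.1), if_neg (fun hc => hi hc.1), dif_neg (by omega)]

lemma s2_seg_20' (m : ℕ) (h1 : 0 < m) (h2 : m + 1 < n) :
    succ2^[20] ((⟨m, by omega⟩ : Fin n), (⟨0, by omega⟩ : Fin 20)) = (⟨m + 1, h2⟩, ⟨0, by omega⟩) := by
  rw [s2_seg_20 ⟨m, by omega⟩ (by simp <;> omega)]
  refine Prod.ext (Fin.ext ?_) rfl
  rw [nextIdx_val]
  show (if m + 1 = n then 0 else m + 1) = m + 1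
  rw [if_neg (by omega)]

lemma s2_big (hn : 0 < n) (j : ℕ) (hj : j + 1 < n) :
    succ2^[10 + 20 * j] ((⟨0, hn⟩ : Fin n), (⟨0, by omega⟩ : Fin 20)) =
      (⟨j + 1, hj⟩, ⟨0, by omega⟩) := by
  induction j with
  | zero =>
    rw [show 10 + 20 * 0 = 10 by ring, s2_to_next0 hn]
    refine Prod.ext (Fin.ext ?_) rfl
    rw [nextIdx_val]
    show (if 0 + 1 = n then 0 else 0 + 1) = 0 + 1
    rw [if_neg (by omega)]
  | succ k ih =>
    rw [show 10 + 20 * (k + 1) = 20 + (10 + 20 * k) by ring, Function.iterate_add_apply,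
      ih (by omega)]
    exact s2_seg_20' (k + 1) (by omega) hj

lemma s2_cover_big (hn : 0 < n) (i : Fin n) (r : Fin 20) (h : i.val = 0 → r.val ≤ 9) :
    ∃ k, succ2^[k] ((⟨0, hn⟩ : Fin n), (⟨0, by omega⟩ : Fin 20)) = (i, r) := by
  by_cases hc : i.val = 0
  · refine ⟨r.val, ?_⟩
    rw [s2_seg0 hn r.val (h hc)]
    exact Prod.ext (Fin.ext hc.symm) (Fin.ext rfl)
  · refine ⟨r.val + (10 + 20 * (i.val - 1)), ?_⟩
    rw [Function.iterate_add_apply, s2_big hn (i.val - 1) (by have := i.isLt; omega),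
      s2_seg ⟨i.val - 1 + 1, by have := i.isLt; omega⟩ (by simp) r.val (by have := r.isLt; omega)]
    exact Prod.ext (Fin.ext (by simp; omega)) (Fin.ext rfl)

lemma s2_cover_small (hn : 0 < n) (i : Fin n) (r : Fin 20) (h1 : i.val = 0) (h2 : 10 ≤ r.val) :
    ∃ k, succ2^[k] ((⟨0, hn⟩ : Fin n), (⟨10, by omega⟩ : Fin 20)) = (i, r) := by
  refine ⟨r.val - 10, ?_⟩
  rw [s2_small hn (r.val - 10) (by have := r.isLt; omega)]
  exact Prod.ext (Fin.ext h1.symm) (Fin.ext (by simp; omega))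

def okS : SegV → Bool := fun s =>
  decide (s = xx 1 ∨ s = t1 ∨ s = xx 2 ∨ s = yy 2 ∨ s = zz 1 ∨
    s = vv 1 ∨ s = t2 ∨ s = vv 2 ∨ s = zz 2 ∨ s = yy 1)

lemma okS_pathC : ∀ r : Fin 20, okS (pathC r) = decide (10 ≤ r.val) := by decide

def hB : Fin n × SegV → Bool := fun v => decide (v.1.val = 0) && okS v.2

def gB : Fin n × Fin 20 → Bool := fun x => decide (x.1.val = 0 ∧ 10 ≤ x.2.val)

lemma hB_th2 (x : Fin n × Fin 20) : hB (th2 x) = gB x := by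
  obtain ⟨i, r⟩ := x
  by_cases hc : i.val = 0
  · simp only [th2, hB, gB]
    rw [if_pos hc, okS_pathC]
    simp [hc]
  · simp only [th2, hB, gB]
    rw [if_neg hc]
    simp [hc]

lemma gB_succ2 (x : Fin n × Fin 20) : gB (succ2 x) = gB x := by
  obtain ⟨i, r⟩ := x
  by_cases c1 : i.val = 0 ∧ r.val = 9
  · have e : succ2 (i, r) = (nextIdx i, ⟨0, by omega⟩) := by
      simp only [succ2]; rw [if_pos c1]
    rw [e]
    simp only [gB]
    apply decide_eq_decide.mpr
    constructor
    · rintro ⟨-, hge⟩; exact absurd hge (by simp)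
    · rintro ⟨-, hge⟩; exact absurd hge (by omega)
  · by_cases c2 : i.val = 0 ∧ r.val = 19
    · have e : succ2 (i, r) = (i, ⟨10, by omega⟩) := by
        simp only [succ2]; rw [if_neg c1, if_pos c2]
      rw [e]
      simp only [gB]
      apply decide_eq_decide.mpr
      constructor
      · rintro ⟨h0, -⟩; exact ⟨h0, by omega⟩
      · rintro ⟨h0, -⟩; exact ⟨h0, by simp⟩
    · by_cases c3 : r.val < 19
      · have e : succ2 (i, r) = (i, ⟨r.val + 1, by omega⟩) := by
          simp only [succ2]; rw [if_neg c1, if_neg c2, dif_pos c3]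
        rw [e]
        simp only [gB]
        apply decide_eq_decide.mpr
        constructor
        · rintro ⟨h0, hge⟩
          refine ⟨h0, ?_⟩
          have h9 : r.val ≠ 9 := fun h9 => c1 ⟨h0, h9⟩
          simp at hge
          omega
        · rintro ⟨h0, hge⟩
          exact ⟨h0, by simp; omega⟩
      · have hi : i.val ≠ 0 := fun h0 => c2 ⟨h0, by have := r.isLt; omega⟩
        have e : succ2 (i, r) = (nextIdx i, ⟨0, by omega⟩) := by
          simp only [succ2]; rw [if_neg c1, if_neg c2, dif_neg c3]
        rw [e]
        simp only [gB]
        apply decide_eq_decide.mpr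
        constructor
        · rintro ⟨-, hge⟩; exact absurd hge (by simp)
        · rintro ⟨h0, -⟩; exact absurd h0 hi

end F2c

section Final
variable {n : ℕ}

lemma numCycles_one_of_connected {V : Type*} {F : SimpleGraph V} (h : F.Connected) :
    F.numCycles = 1 := by
  haveI : Subsingleton F.ConnectedComponent :=
    ⟨fun c d => ConnectedComponent.ind₂
      (fun v w => ConnectedComponent.eq.mpr (h.preconnected v w)) c d⟩
  haveI : Nonempty F.ConnectedComponent := ⟨F.connectedComponentMk h.nonempty.some⟩
  exact Nat.card_unique
  
lemma F2_numCycles (hn : 0 < n) : (genF (th2 (n := n)) succ2).numCycles = 2 := by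
  classical
  set F := genF (th2 (n := n)) succ2 with hF
  have hadj : ∀ a b : Fin n × SegV, F.Adj a b → hB a = hB b := by
    intro a b hab
    rw [hF, genF, fromRel_adj] at hab
    rcases hab with ⟨-, ⟨x, rfl, rfl⟩ | ⟨x, rfl, rfl⟩⟩
    · rw [hB_th2, hB_th2, gB_succ2]
    · rw [hB_th2, hB_th2, gB_succ2]
  have hwalk : ∀ a b : Fin n × SegV, F.Reachable a b → hB a = hB b := by
    intro a b hr
    obtain ⟨w⟩ := hr
    induction w with
    | nil => rfl
    | cons ha p ih => exact (hadj _ _ ha).trans ih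
  let φ : F.ConnectedComponent → Bool :=
    ConnectedComponent.lift hB (fun v w p _ => hwalk v w ⟨p⟩)
  have base_big : hB (th2 ((⟨0, hn⟩ : Fin n), (⟨0, by omega⟩ : Fin 20))) = false := by
    rw [hB_th2]; simp [gB]
  have base_small : hB (th2 ((⟨0, hn⟩ : Fin n), (⟨10, by omega⟩ : Fin 20))) = true := by
    rw [hB_th2]; simp [gB]
  have hinj : Function.Injective φ := by
    intro c d
    refine ConnectedComponent.ind₂ (fun v w => ?_) c d
    intro hvw
    have hvw' : hB v = hB w := by
      simpa [φ, ConnectedComponent.lift_mk] using hvw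
    obtain ⟨x, rfl⟩ := th2_surj v
    obtain ⟨y, rfl⟩ := th2_surj w
    rw [hB_th2, hB_th2] at hvw'
    apply ConnectedComponent.eq.mpr
    by_cases hgx : x.1.val = 0 ∧ 10 ≤ x.2.val
    · have hgy : y.1.val = 0 ∧ 10 ≤ y.2.val := by
        have : gB y = true := by rw [← hvw']; simp [gB, hgx]
        simpa [gB] using this
      obtain ⟨kx, hkx⟩ := s2_cover_small hn x.1 x.2 hgx.1 hgx.2
      obtain ⟨ky, hky⟩ := s2_cover_small hn y.1 y.2 hgy.1 hgy.2
      have rx := genF_reach th2_inj succ2_ne ((⟨0, hn⟩ : Fin n), (⟨10, by omega⟩ : Fin 20)) kx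
      have ry := genF_reach th2_inj succ2_ne ((⟨0, hn⟩ : Fin n), (⟨10, by omega⟩ : Fin 20)) ky
      rw [hkx] at rx
      rw [hky] at ry
      exact (rx.symm.trans ry : F.Reachable (x.1, _) _)
    · have hgy : ¬(y.1.val = 0 ∧ 10 ≤ y.2.val) := by
        have : gB y = false := by rw [← hvw']; simp [gB, hgx]
        simpa [gB] using this
      obtain ⟨kx, hkx⟩ := s2_cover_big hn x.1 x.2 (by have := x.2.isLt; omega)
      obtain ⟨ky, hky⟩ := s2_cover_big hn y.1 y.2 (by have := y.2.isLt; omega)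
      have rx := genF_reach th2_inj succ2_ne ((⟨0, hn⟩ : Fin n), (⟨0, by omega⟩ : Fin 20)) kx
      have ry := genF_reach th2_inj succ2_ne ((⟨0, hn⟩ : Fin n), (⟨0, by omega⟩ : Fin 20)) ky
      rw [hkx] at rx
      rw [hky] at ry
      exact (rx.symm.trans ry : F.Reachable (x.1, _) _)
  have hsurj : Function.Surjective φ := by
    intro b
    cases b
    · exact ⟨F.connectedComponentMk _, by
        rw [show φ (F.connectedComponentMk _) = _ from ConnectedComponent.lift_mk]
        exact base_big⟩
    · exact ⟨F.connectedComponentMk _, by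
        rw [show φ (F.connectedComponentMk _) = _ from ConnectedComponent.lift_mk]
        exact base_small⟩
  have : Nat.card F.ConnectedComponent = Nat.card Bool :=
    Nat.card_congr (Equiv.ofBijective φ ⟨hinj, hsurj⟩)
  rw [SimpleGraph.numCycles, this, Nat.card_eq_fintype_card]
  rfl

end Final

/-- For every `n ≥ 1`, `T₃(n)` has a hamiltonian 2-factor and a 2-factor with exactly
two cycles; hence `T₃(n)` is not pseudo 2-factor isomorphic. -/
theorem T3_not_pseudo_two_factor_isomorphic (n : ℕ) (hn : 1 ≤ n) :
    (∃ F : SimpleGraph (Fin n × SegV), (T3 n).IsTwoFactor F ∧ F.Connected) ∧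
    (∃ F : SimpleGraph (Fin n × SegV), (T3 n).IsTwoFactor F ∧ F.numCycles = 2) ∧
    ¬ (T3 n).PseudoTwoFactorIsomorphic := by
  have hn0 : 0 < n := hn
  refine ⟨⟨genF th1 succ1, F1_isTwoFactor, F1_connected hn0⟩,
    ⟨genF th2 succ2, F2_isTwoFactor, F2_numCycles hn0⟩, fun hP => ?_⟩
  have h1 : (genF (th1 (n := n)) succ1).numCycles = 1 :=
    numCycles_one_of_connected (F1_connected hn0)
  have h2 := hP _ _ F1_isTwoFactor F2_isTwoFactor
  rw [h1, F2_numCycles hn0] at h2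
  norm_num at h2
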